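/- Let (ω, c) ∈ ℝ² satisfy condition (WC). Then, as η₃ tends to α₁ from the left within (α₀, α₁), T(η₃) tends to +∞. -/

import Mathlib

/-!
Write `ω = s²`; condition (WC) becomes `-2s < c ≤ 2s`, and `α₁ = 4s + 2c`, where
`A(α₁) = (4s - 2c)²`, `η₁(α₁) = 2c - 4s` and `η₂(α₁) = 0`. On `(α₀, α₁)` the roots satisfy
`η₁ < 0 < η₂ < η₃`, so `0 ≤ m < 1`.

If `c < 2s`, then `m(η₃) → 1` from below while the denominator `√(η₃ √A)` tends to
`√((4s + 2c)(4s - 2c)) > 0`; since `K(κ) ≥ -log (1 - κ²) / 2`, the period blows up.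
If `c = 2s`, the denominator tends to `0⁺` while `K ≥ π / 2`.
-/

open Real Filter Set Topology

noncomputable def ellipticK (κ : ℝ) : ℝ :=
  ∫ θ in (0 : ℝ)..(π / 2), 1 / √(1 - κ ^ 2 * sin θ ^ 2)

lemma one_sub_sq_mul_sin_sq_pos {κ : ℝ} (hκ : κ ^ 2 < 1) (θ : ℝ) : 0 < 1 - κ ^ 2 * sin θ ^ 2 := by
  nlinarith [sin_sq_le_one θ, sq_nonneg κ]

lemma continuous_ellipticK_integrand {κ : ℝ} (hκ : κ ^ 2 < 1) :
    Continuous fun θ => 1 / √(1 - κ ^ 2 * sin θ ^ 2) :=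
  continuous_const.div (by fun_prop) fun θ => (sqrt_pos.2 (one_sub_sq_mul_sin_sq_pos hκ θ)).ne'

lemma pi_div_two_le_ellipticK {κ : ℝ} (hκ : κ ^ 2 < 1) : π / 2 ≤ ellipticK κ := by
  calc π / 2 = ∫ _ in (0 : ℝ)..(π / 2), (1 : ℝ) := by simp
    _ ≤ ellipticK κ := by
      refine intervalIntegral.integral_mono_on (by positivity) intervalIntegrable_const
        ((continuous_ellipticK_integrand hκ).intervalIntegrable _ _) fun θ _ => ?_
      rw [le_div_iff₀ (sqrt_pos.2 (one_sub_sq_mul_sin_sq_pos hκ θ)), one_mul]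
      exact sqrt_le_one.2 (by nlinarith [sq_nonneg (sin θ), sq_nonneg κ])

/-- Near `θ = π / 2` the integrand is at least `1 / (ε + (π / 2 - θ))` with `ε = √(1 - κ²)`,
whose integral is `log (1 + π / (2ε))`. -/
lemma neg_log_le_ellipticK {κ : ℝ} (hκ : κ ^ 2 < 1) : -log (1 - κ ^ 2) / 2 ≤ ellipticK κ := by
  set ε := √(1 - κ ^ 2)
  have hε : 0 < ε := sqrt_pos.2 (by linarith)
  have hε2 : ε ^ 2 = 1 - κ ^ 2 := sq_sqrt (by linarith)
  have hbound : ∀ θ ∈ Icc 0 (π / 2), (ε + π / 2 - θ)⁻¹ ≤ 1 / √(1 - κ ^ 2 * sin θ ^ 2) := by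
    rintro θ ⟨hθ₀, hθ₁⟩
    have hcos₀ : 0 ≤ cos θ := cos_nonneg_of_mem_Icc ⟨by linarith, hθ₁⟩
    have hcos₁ : cos θ ≤ π / 2 - θ := by
      rw [← sin_pi_div_two_sub]; exact sin_le (by linarith)
    have hsq : 1 - κ ^ 2 * sin θ ^ 2 ≤ (ε + (π / 2 - θ)) ^ 2 := by
      nlinarith [sin_sq_add_cos_sq θ, mul_le_mul hcos₁ hcos₁ hcos₀ (by linarith),
        mul_nonneg hε.le (show 0 ≤ π / 2 - θ by linarith), sq_nonneg (cos θ)]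
    rw [one_div, add_sub_assoc]
    refine inv_anti₀ (sqrt_pos.2 (one_sub_sq_mul_sin_sq_pos hκ θ)) ?_
    calc √(1 - κ ^ 2 * sin θ ^ 2) ≤ √((ε + (π / 2 - θ)) ^ 2) := sqrt_le_sqrt hsq
      _ = ε + (π / 2 - θ) := sqrt_sq (by linarith)
  have hint : ∫ θ in (0 : ℝ)..(π / 2), (ε + π / 2 - θ)⁻¹ = log ((ε + π / 2) / ε) := by
    rw [intervalIntegral.integral_comp_sub_left (fun x => x⁻¹), sub_zero, add_sub_cancel_right,
      integral_inv_of_pos hε (by positivity)]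
  have hlog : -log (1 - κ ^ 2) / 2 ≤ log ((ε + π / 2) / ε) := by
    rw [log_div (by positivity) hε.ne', log_sqrt (by linarith)]
    have : 0 ≤ log (ε + π / 2) := log_nonneg (by linarith [pi_gt_three])
    linarith
  calc -log (1 - κ ^ 2) / 2 ≤ ∫ θ in (0 : ℝ)..(π / 2), (ε + π / 2 - θ)⁻¹ := hint ▸ hlog
    _ ≤ ellipticK κ := by
      refine intervalIntegral.integral_mono_on (by positivity) ?_
        ((continuous_ellipticK_integrand hκ).intervalIntegrable _ _) hbound
      refine (ContinuousOn.inv₀ (by fun_prop) fun θ hθ => ?_).intervalIntegrable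
      rw [uIcc_of_le (by positivity)] at hθ
      linarith [hθ.2]

lemma tendsto_ellipticK_nhdsLT_one : Tendsto ellipticK (𝓝[<] 1) atTop := by
  have h : Tendsto (fun κ : ℝ => 1 - κ ^ 2) (𝓝[<] 1) (𝓝[>] 0) := by
    refine tendsto_nhdsWithin_iff.2 ⟨?_, ?_⟩
    · exact tendsto_nhdsWithin_of_tendsto_nhds
        ((by fun_prop : Continuous fun κ : ℝ => 1 - κ ^ 2).tendsto' 1 0 (by norm_num))
    · filter_upwards [Ioo_mem_nhdsLT (show (-1 : ℝ) < 1 by norm_num)] with κ hκ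
      simp only [mem_Ioi]; nlinarith [hκ.1, hκ.2]
  refine tendsto_atTop_mono' _ ?_
    ((tendsto_neg_atBot_atTop.comp (tendsto_log_nhdsGT_zero.comp h)).atTop_div_const two_pos)
  filter_upwards [Ioo_mem_nhdsLT (show (-1 : ℝ) < 1 by norm_num)] with κ hκ
  exact neg_log_le_ellipticK (by nlinarith [hκ.1, hκ.2])

namespace PeriodMap

section Definitions

variable (ω c : ℝ)

noncomputable def alpha₀ : ℝ := (4 * c + √(48 * ω + 4 * c ^ 2)) / 3

def A (t : ℝ) : ℝ := 64 * ω - 3 * t ^ 2 + 8 * c * t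

noncomputable def eta₁ (t : ℝ) : ℝ := (-t + 4 * c - √(A ω c t)) / 2

noncomputable def eta₂ (t : ℝ) : ℝ := (-t + 4 * c + √(A ω c t)) / 2

noncomputable def modulus (t : ℝ) : ℝ :=
  √((-eta₁ ω c t) * (t - eta₂ ω c t) / (t * (eta₂ ω c t - eta₁ ω c t)))

noncomputable def period (t : ℝ) : ℝ :=
  8 * ellipticK (modulus ω c t) / √(t * √(A ω c t))

end Definitions

lemma exists_eq_sq_of_wc {ω c : ℝ} (hWC : ω > c ^ 2 / 4 ∨ (ω = c ^ 2 / 4 ∧ c > 0)) :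
    ∃ s, ω = s ^ 2 ∧ -(2 * s) < c ∧ c ≤ 2 * s := by
  have hω : 0 ≤ ω := by rcases hWC with h | ⟨h, -⟩ <;> nlinarith [sq_nonneg c]
  have hs := sq_sqrt hω
  have hs₀ := sqrt_nonneg ω
  refine ⟨√ω, hs.symm, ?_⟩
  rcases hWC with h | ⟨h, hc⟩
  · constructor <;> nlinarith
  · constructor <;> nlinarith

lemma six_mul_add_le_sqrt (s c : ℝ) : 6 * s + c ≤ √(48 * s ^ 2 + 4 * c ^ 2) :=
  (le_abs_self _).trans (abs_le_sqrt (by nlinarith [sq_nonneg (2 * s - c)]))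

lemma sqrt_div_lt_one {e₁ e₂ t : ℝ} (h₁ : e₁ < 0) (h₂ : 0 < e₂) (h₃ : e₂ < t) :
    √((-e₁) * (t - e₂) / (t * (e₂ - e₁))) < 1 := by
  rw [sqrt_lt' one_pos, one_pow, div_lt_one (by nlinarith)]
  nlinarith

variable {s c t : ℝ}

lemma pos_of_mem_Ioo (hc : -(2 * s) < c)
    (ht : t ∈ Ioo (alpha₀ (s ^ 2) c) (4 * s + 2 * c)) : 0 < t := by
  have hr := sq_sqrt (show 0 ≤ 48 * s ^ 2 + 4 * c ^ 2 by positivity)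
  have hr₀ := sqrt_nonneg (48 * s ^ 2 + 4 * c ^ 2)
  have h₀ := ht.1
  unfold alpha₀ at h₀
  nlinarith

lemma A_pos_of_mem_Ioo
    (ht : t ∈ Ioo (alpha₀ (s ^ 2) c) (4 * s + 2 * c)) : 0 < A (s ^ 2) c t := by
  have hr := sq_sqrt (show 0 ≤ 48 * s ^ 2 + 4 * c ^ 2 by positivity)
  have hr₀ := sqrt_nonneg (48 * s ^ 2 + 4 * c ^ 2)
  have h6 := six_mul_add_le_sqrt s c
  obtain ⟨h₀, h₁⟩ := ht
  unfold alpha₀ at h₀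
  unfold A
  -- `3 A(t) = (2r - (3t - 4c)) (2r + (3t - 4c))` with `r = √(48s² + 4c²)`
  nlinarith [mul_pos (show 0 < 2 * √(48 * s ^ 2 + 4 * c ^ 2) - (3 * t - 4 * c) by linarith)
    (show 0 < 2 * √(48 * s ^ 2 + 4 * c ^ 2) + (3 * t - 4 * c) by linarith)]

lemma eta_order_of_mem_Ioo (hc' : c ≤ 2 * s)
    (ht : t ∈ Ioo (alpha₀ (s ^ 2) c) (4 * s + 2 * c)) :
    eta₁ (s ^ 2) c t < 0 ∧ 0 < eta₂ (s ^ 2) c t ∧ eta₂ (s ^ 2) c t < t := by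
  have hA := A_pos_of_mem_Ioo ht
  have ha₀ : 0 < √(A (s ^ 2) c t) := sqrt_pos.2 hA
  have ha : √(A (s ^ 2) c t) ^ 2 = 64 * s ^ 2 - 3 * t ^ 2 + 8 * c * t := sq_sqrt hA.le
  have hr := sq_sqrt (show 0 ≤ 48 * s ^ 2 + 4 * c ^ 2 by positivity)
  have hr₀ := sqrt_nonneg (48 * s ^ 2 + 4 * c ^ 2)
  have h6 := six_mul_add_le_sqrt s c
  obtain ⟨h₀, h₁⟩ := ht
  unfold alpha₀ at h₀
  -- `η₁ η₂ = (t - 2c)² - 16s²`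
  have hprod : eta₁ (s ^ 2) c t * eta₂ (s ^ 2) c t < 0 := by
    unfold eta₁ eta₂
    nlinarith [mul_pos (show 0 < 4 * s - (t - 2 * c) by linarith)
      (show 0 < 4 * s + (t - 2 * c) by linarith)]
  have hgap : eta₁ (s ^ 2) c t < eta₂ (s ^ 2) c t := by unfold eta₁ eta₂; linarith
  have hη₁ : eta₁ (s ^ 2) c t < 0 := by
    by_contra! h; nlinarith
  refine ⟨hη₁, by nlinarith, ?_⟩
  unfold eta₂
  -- `η₂ < t ↔ √A(t) < 3t - 4c`, and `3 ((3t - 4c)² - A(t)) = 4 ((3t - 4c)² - r²)`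
  nlinarith [mul_pos (show 0 < 3 * t - 4 * c - √(48 * s ^ 2 + 4 * c ^ 2) by linarith)
    (show 0 < 3 * t - 4 * c + √(48 * s ^ 2 + 4 * c ^ 2) by linarith)]

lemma modulus_lt_one_of_mem_Ioo (hc' : c ≤ 2 * s)
    (ht : t ∈ Ioo (alpha₀ (s ^ 2) c) (4 * s + 2 * c)) :
    modulus (s ^ 2) c t < 1 := by
  obtain ⟨h₁, h₂, h₃⟩ := eta_order_of_mem_Ioo hc' ht
  exact sqrt_div_lt_one h₁ h₂ h₃

lemma A_four_mul_add (s c : ℝ) : A (s ^ 2) c (4 * s + 2 * c) = (4 * s - 2 * c) ^ 2 := by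
  unfold A; ring

lemma continuous_A (ω c : ℝ) : Continuous (A ω c) := by
  unfold A; fun_prop

lemma tendsto_denominator (hc' : c ≤ 2 * s) :
    Tendsto (fun t => √(t * √(A (s ^ 2) c t))) (𝓝 (4 * s + 2 * c))
      (𝓝 √((4 * s + 2 * c) * (4 * s - 2 * c))) := by
  have hA := continuous_A (s ^ 2) c
  refine ((by fun_prop : Continuous fun t => √(t * √(A (s ^ 2) c t))).tendsto' _ _ ?_)
  rw [A_four_mul_add, sqrt_sq (by linarith)]

lemma tendsto_modulus (hc : -(2 * s) < c) (hlt : c < 2 * s) :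
    Tendsto (modulus (s ^ 2) c) (𝓝 (4 * s + 2 * c)) (𝓝 1) := by
  have hA := continuous_A (s ^ 2) c
  have hsqrt : √(A (s ^ 2) c (4 * s + 2 * c)) = 4 * s - 2 * c := by
    rw [A_four_mul_add, sqrt_sq (by linarith)]
  have hden : (4 * s + 2 * c) * (4 * s - 2 * c) ≠ 0 := by nlinarith
  have hcont : ContinuousAt (modulus (s ^ 2) c) (4 * s + 2 * c) := by
    unfold modulus eta₁ eta₂
    refine (ContinuousAt.div (by fun_prop) (by fun_prop) ?_).sqrt
    rw [hsqrt]; convert hden using 2; ring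
  convert hcont.tendsto
  unfold modulus eta₁ eta₂
  rw [hsqrt, eq_comm, sqrt_eq_one, div_eq_one_iff_eq (by convert hden using 2; ring)]
  ring

lemma tendsto_period_of_lt (hc : -(2 * s) < c) (hlt : c < 2 * s) :
    Tendsto (period (s ^ 2) c)
      (𝓝[Ioo (alpha₀ (s ^ 2) c) (4 * s + 2 * c)] (4 * s + 2 * c)) atTop := by
  have hD : 0 < √((4 * s + 2 * c) * (4 * s - 2 * c)) := sqrt_pos.2 (by nlinarith)
  have hm : Tendsto (modulus (s ^ 2) c)
      (𝓝[Ioo (alpha₀ (s ^ 2) c) (4 * s + 2 * c)] (4 * s + 2 * c))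
      (𝓝[<] 1) :=
    tendsto_nhdsWithin_iff.2 ⟨(tendsto_modulus hc hlt).mono_left nhdsWithin_le_nhds,
      eventually_nhdsWithin_of_forall fun t ht => modulus_lt_one_of_mem_Ioo hlt.le ht⟩
  have hK := (tendsto_ellipticK_nhdsLT_one.comp hm).const_mul_atTop (show (0 : ℝ) < 8 by norm_num)
  refine (hK.atTop_mul_pos (inv_pos.2 hD)
    ((tendsto_nhdsWithin_of_tendsto_nhds (tendsto_denominator hlt.le)).inv₀ hD.ne')).congr
    fun t => (div_eq_mul_inv _ _).symm

lemma tendsto_period_of_eq (hs : 0 < s) (hc : c = 2 * s) :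
    Tendsto (period (s ^ 2) c)
      (𝓝[Ioo (alpha₀ (s ^ 2) c) (4 * s + 2 * c)] (4 * s + 2 * c)) atTop := by
  have hpos : ∀ t ∈ Ioo (alpha₀ (s ^ 2) c) (4 * s + 2 * c),
      0 < √(t * √(A (s ^ 2) c t)) := fun t ht =>
    sqrt_pos.2 (mul_pos (pos_of_mem_Ioo (by linarith) ht) (sqrt_pos.2 (A_pos_of_mem_Ioo ht)))
  have hD : Tendsto (fun t => √(t * √(A (s ^ 2) c t)))
      (𝓝[Ioo (alpha₀ (s ^ 2) c) (4 * s + 2 * c)] (4 * s + 2 * c))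
      (𝓝[>] 0) := by
    refine tendsto_nhdsWithin_iff.2 ⟨?_, eventually_nhdsWithin_of_forall hpos⟩
    refine tendsto_nhdsWithin_of_tendsto_nhds ?_
    have h := tendsto_denominator hc.le
    rwa [show 4 * s - 2 * c = 0 by linarith, mul_zero, sqrt_zero] at h
  refine tendsto_atTop_mono' _ ?_
    (hD.inv_tendsto_nhdsGT_zero.const_mul_atTop (show 0 < 4 * π by positivity))
  filter_upwards [self_mem_nhdsWithin] with t ht
  have hm := modulus_lt_one_of_mem_Ioo hc.le ht
  have hm₀ : 0 ≤ modulus (s ^ 2) c t := sqrt_nonneg _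
  have hK := pi_div_two_le_ellipticK (κ := modulus (s ^ 2) c t) (by nlinarith)
  rw [period, div_eq_mul_inv]
  exact mul_le_mul_of_nonneg_right (by linarith) (inv_nonneg.2 (hpos t ht).le)

end PeriodMap

theorem stmt_13 (ω c : ℝ) (hWC : ω > c ^ 2 / 4 ∨ (ω = c ^ 2 / 4 ∧ c > 0))
    (α₀ α₁ : ℝ)
    (hα₀ : α₀ = (4 * c + Real.sqrt (48 * ω + 4 * c ^ 2)) / 3)
    (hα₁ : α₁ = 4 * Real.sqrt ω + 2 * c)
    (η₁ η₂ m : ℝ → ℝ)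
    (hη₁ : ∀ t, η₁ t = (-t + 4 * c - Real.sqrt (64 * ω - 3 * t ^ 2 + 8 * c * t)) / 2)
    (hη₂ : ∀ t, η₂ t = (-t + 4 * c + Real.sqrt (64 * ω - 3 * t ^ 2 + 8 * c * t)) / 2)
    (hm : ∀ t, m t = Real.sqrt ((-η₁ t) * (t - η₂ t) / (t * (η₂ t - η₁ t))))
    (K T : ℝ → ℝ)
    (hK : ∀ κ, K κ = ∫ θ in (0 : ℝ)..(Real.pi / 2),
      1 / Real.sqrt (1 - κ ^ 2 * Real.sin θ ^ 2))
    (hT : ∀ t, T t = 8 * K (m t) /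
      Real.sqrt (t * Real.sqrt (64 * ω - 3 * t ^ 2 + 8 * c * t))) :
    Tendsto T (nhdsWithin α₁ (Set.Ioo α₀ α₁)) atTop := by
  obtain rfl : η₁ = PeriodMap.eta₁ ω c := funext hη₁
  obtain rfl : η₂ = PeriodMap.eta₂ ω c := funext hη₂
  obtain rfl : m = PeriodMap.modulus ω c := funext hm
  obtain rfl : K = ellipticK := funext hK
  obtain rfl : T = PeriodMap.period ω c := funext hT
  subst hα₀ hα₁
  obtain ⟨s, rfl, hc, hc'⟩ := PeriodMap.exists_eq_sq_of_wc hWC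
  rw [sqrt_sq (by linarith)]
  rcases hc'.lt_or_eq with hlt | heq
  · exact PeriodMap.tendsto_period_of_lt hc hlt
  · exact PeriodMap.tendsto_period_of_eq (by linarith) heq
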